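/- Distributed gradient descent is equivalent to joint gradient descent on a factored controller: if each agent i updates its own parameters w_i by the stochastic gradient Δw_i^j = α γ^t r(t) Σ_{τ≤t} ∂/∂w_i^j log Pr(a_i(τ) | h_i^{τ-1}, μ_i) computed from its local history, then, given the same sampled joint history and same initial parameters, the resulting parameter updates coincide exactly with those of centralized stochastic gradient descent on V using the joint log-likelihood Σ_{τ≤t} ∂/∂w log Pr(a⃗(τ) | h^{τ-1}, μ⃗). -/

import Mathlib

/-! Since the factors of the other agents do not depend on agent `k`'s parameter, the joint
action probability is agent `k`'s factor times a constant; the logarithm turns that constant into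
an additive one, which the derivative kills. So each summand of the joint update already equals
the corresponding summand of the local update. -/

theorem deriv_log_mul_const {f : ℝ → ℝ} {c : ℝ} (x : ℝ) (hf : ∀ w, f w ≠ 0) (hc : c ≠ 0) :
    deriv (fun w => Real.log (f w * c)) x = deriv (fun w => Real.log (f w)) x := by
  have hlog : (fun w => Real.log (f w * c)) = fun w => Real.log (f w) + Real.log c := by
    funext w
    exact Real.log_mul (hf w) hc
  rw [hlog, deriv_add_const]

theorem deriv_log_prod_eq_of_forall_ne_const {ι : Type*} [Fintype ι] [DecidableEq ι]
    {f : ι → ℝ → ℝ} {k : ι} (x : ℝ) (hf : ∀ i w, f i w ≠ 0)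
    (hconst : ∀ i, i ≠ k → ∀ w, f i w = f i x) :
    deriv (fun w => Real.log (∏ i, f i w)) x = deriv (fun w => Real.log (f k w)) x := by
  have hfactor : ∀ w, ∏ i, f i w = f k w * ∏ i ∈ {k}ᶜ, f i x := by
    intro w
    rw [Fintype.prod_eq_mul_prod_compl k]
    refine congrArg (f k w * ·) (Finset.prod_congr rfl fun i hi => hconst i ?_ w)
    simpa using hi
  have hrest : ∏ i ∈ {k}ᶜ, f i x ≠ 0 := Finset.prod_ne_zero_iff.mpr fun i _ => hf i x
  simp only [hfactor]
  exact deriv_log_mul_const x (hf k) hrest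

theorem distributed_gradient_descent_eq_joint_gradient_descent_general
    {m : ℕ} (P : Fin m → ℕ → ℝ → ℝ) (k : Fin m) (w₀ : ℝ)
    (α γ : ℝ) (t : ℕ) (r : ℝ)
    (hpos : ∀ i τ w, 0 < P i τ w)
    (hconst : ∀ i, i ≠ k → ∀ τ w, P i τ w = P i τ w₀) :
    α * γ ^ t * r *
        ∑ τ ∈ Finset.range t, deriv (fun w => Real.log (∏ i, P i τ w)) w₀ =
      α * γ ^ t * r *
        ∑ τ ∈ Finset.range t, deriv (fun w => Real.log (P k τ w)) w₀ := by
  congr 1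
  exact Finset.sum_congr rfl fun τ _ =>
    deriv_log_prod_eq_of_forall_ne_const w₀ (fun i w => (hpos i τ w).ne') fun i hik => hconst i hik τ

/-- Distributed gradient descent is equivalent to joint gradient descent on a
factored controller.  Here `P i τ w` denotes the probability
`Pr(a_i(τ) | h_i^{τ-1}, μ_i)` of agent `i`'s action at step `τ` of the sampled
joint history, viewed as a function of agent `k`'s parameter `w = w_k^j`
(all other parameters being fixed); factors of agents `i ≠ k` do not depend on
this parameter.  Then the centralized update
`α γ^t r(t) Σ_{τ≤t} ∂/∂w log Pr(a⃗(τ) | h^{τ-1}, μ⃗)`, using the joint action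
probability `Pr(a⃗(τ) | h^{τ-1}, μ⃗) = ∏ i Pr(a_i(τ) | h_i^{τ-1}, μ_i)`,
coincides exactly with agent `k`'s local update
`α γ^t r(t) Σ_{τ≤t} ∂/∂w log Pr(a_k(τ) | h_k^{τ-1}, μ_k)`. -/
theorem distributed_gradient_descent_eq_joint_gradient_descent
    {m : ℕ} (P : Fin m → ℕ → ℝ → ℝ) (k : Fin m) (w₀ : ℝ)
    (α γ : ℝ) (t : ℕ) (r : ℝ)
    (hpos : ∀ i τ w, 0 < P i τ w)
    (hdiff : ∀ i τ, Differentiable ℝ (P i τ))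
    (hconst : ∀ i, i ≠ k → ∀ τ w, P i τ w = P i τ w₀) :
    α * γ ^ t * r *
        ∑ τ ∈ Finset.range t, deriv (fun w => Real.log (∏ i, P i τ w)) w₀ =
      α * γ ^ t * r *
        ∑ τ ∈ Finset.range t, deriv (fun w => Real.log (P k τ w)) w₀ :=
  distributed_gradient_descent_eq_joint_gradient_descent_general P k w₀ α γ t r hpos hconst
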